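/- Let T1, T2 : A → B(H) be completely positive maps with Stinespring dilations (π1, V̂1, K1) and (π2, V̂2, K2), and let W : K2 → K1 be a bounded operator with ‖W‖ ≤ 1 and W π2(a) = π1(a) W for all a ∈ A. On the Hilbert direct sum K1 ⊕ K2 define the *-homomorphism π := π1 ⊕ π2 (acting diagonally) and the bounded operators V1 ψ := (V̂1 ψ, 0) and V2 ψ := (W V̂2 ψ, sqrt(1 − W*W) V̂2 ψ), where sqrt(1 − W*W) is the positive square root of the positive operator 1 − W*W on K2. Then (π, V1, K1 ⊕ K2), (π, V2, K1 ⊕ K2) is a common dilation of (T1, T2), and V1* V2 = V̂1* W V̂2. -/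

import Mathlib

noncomputable section

open ContinuousLinearMap

/-- A linear map between star algebras is *completely positive* if, for every `n`, its
entrywise application to `n × n` matrices maps positive elements (i.e. elements of the form
`star y * y`) to positive elements. -/
def IsCPMap {A B : Type*} [NonUnitalSemiring A] [StarRing A]
    [NonUnitalSemiring B] [StarRing B] (T : A → B) : Prop :=
  ∀ (n : ℕ) (x : Matrix (Fin n) (Fin n) A),
    (∃ y : Matrix (Fin n) (Fin n) A, x = star y * y) →
      ∃ z : Matrix (Fin n) (Fin n) B, x.map T = star z * z

/-- `(π, V, K)` is a Stinespring dilation of `T : A → B(H)`: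
`T a = V⋆ ∘ π a ∘ V` for all `a`. -/
def IsStinespring {A : Type*} [CStarAlgebra A]
    {H : Type*} [NormedAddCommGroup H] [InnerProductSpace ℂ H] [CompleteSpace H]
    {K : Type*} [NormedAddCommGroup K] [InnerProductSpace ℂ K] [CompleteSpace K]
    (T : A →ₗ[ℂ] (H →L[ℂ] H)) (π : A →⋆ₙₐ[ℂ] (K →L[ℂ] K)) (V : H →L[ℂ] K) : Prop :=
  ∀ a : A, T a = (ContinuousLinearMap.adjoint V).comp ((π a).comp V)

/-! Since `W` intertwines `π₂` with `π₁`, and (taking adjoints at `star a`) also `π₂(a)⋆` with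
`π₁(a)⋆`, the operator `W⋆W` commutes with `π₂(A)`; hence so do `1 - W⋆W` and its positive square
root `R`. Therefore `W⋆ π₁(a) W + R π₂(a) R = W⋆W π₂(a) + π₂(a) (1 - W⋆W) = π₂(a)`, and compressing
by `V̂₂` gives `V₂⋆ π(a) V₂ = T₂(a)`. The identities for `V₁` hold because `V₁` lands in the first
summand. -/

theorem Commute.of_mul_self_of_nonneg {A : Type*} [CStarAlgebra A] [PartialOrder A]
    [StarOrderedRing A] {r b : A} (hr : 0 ≤ r) (h : Commute (r * r) b) : Commute r b := by
  rw [← CFC.sqrt_mul_self r hr, CFC.sqrt_eq_cfc]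
  exact h.cfc_nnreal _

namespace ContinuousLinearMap

variable {𝕜 E₁ E₂ F₁ F₂ H : Type*} [RCLike 𝕜]
  [NormedAddCommGroup E₁] [InnerProductSpace 𝕜 E₁] [NormedAddCommGroup E₂] [InnerProductSpace 𝕜 E₂]
  [NormedAddCommGroup F₁] [InnerProductSpace 𝕜 F₁] [NormedAddCommGroup F₂] [InnerProductSpace 𝕜 F₂]
  [NormedAddCommGroup H] [InnerProductSpace 𝕜 H]

def withLpProd (U : H →L[𝕜] E₁) (V : H →L[𝕜] E₂) : H →L[𝕜] WithLp 2 (E₁ × E₂) :=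
  (WithLp.prodContinuousLinearEquiv 2 𝕜 E₁ E₂).symm.toContinuousLinearMap ∘L U.prod V

@[simp]
theorem withLpProd_apply (U : H →L[𝕜] E₁) (V : H →L[𝕜] E₂) (x : H) :
    U.withLpProd V x = WithLp.toLp 2 (U x, V x) := rfl

def withLpProdMap (S : E₁ →L[𝕜] F₁) (T : E₂ →L[𝕜] F₂) :
    WithLp 2 (E₁ × E₂) →L[𝕜] WithLp 2 (F₁ × F₂) :=
  (S ∘L WithLp.fstL 2 𝕜 E₁ E₂).withLpProd (T ∘L WithLp.sndL 2 𝕜 E₁ E₂)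

@[simp]
theorem withLpProdMap_apply (S : E₁ →L[𝕜] F₁) (T : E₂ →L[𝕜] F₂) (x : WithLp 2 (E₁ × E₂)) :
    S.withLpProdMap T x = WithLp.toLp 2 (S x.fst, T x.snd) := rfl

theorem withLpProdMap_comp_withLpProd (S : E₁ →L[𝕜] F₁) (T : E₂ →L[𝕜] F₂)
    (U : H →L[𝕜] E₁) (V : H →L[𝕜] E₂) :
    S.withLpProdMap T ∘L U.withLpProd V = (S ∘L U).withLpProd (T ∘L V) := rfl

variable [CompleteSpace E₁] [CompleteSpace E₂] [CompleteSpace H]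

theorem adjoint_withLpProd_comp_withLpProd (U U' : H →L[𝕜] E₁) (V V' : H →L[𝕜] E₂) :
    adjoint (U.withLpProd V) ∘L U'.withLpProd V' = adjoint U ∘L U' + adjoint V ∘L V' := by
  ext x
  refine ext_inner_right 𝕜 fun y => ?_
  simp [adjoint_inner_left, inner_add_left]

variable [CompleteSpace F₁] [CompleteSpace F₂]

theorem adjoint_withLpProdMap (S : E₁ →L[𝕜] F₁) (T : E₂ →L[𝕜] F₂) :
    adjoint (S.withLpProdMap T) = (adjoint S).withLpProdMap (adjoint T) := by
  refine ((eq_adjoint_iff _ _).2 fun x y => ?_).symm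
  simp [adjoint_inner_left]

end ContinuousLinearMap

namespace NonUnitalStarAlgHom

variable {𝕜 A K₁ K₂ : Type*} [RCLike 𝕜] [NonUnitalNonAssocSemiring A] [Module 𝕜 A] [Star A]
  [NormedAddCommGroup K₁] [InnerProductSpace 𝕜 K₁] [CompleteSpace K₁]
  [NormedAddCommGroup K₂] [InnerProductSpace 𝕜 K₂] [CompleteSpace K₂]

def withLpProdMap (π₁ : A →⋆ₙₐ[𝕜] (K₁ →L[𝕜] K₁)) (π₂ : A →⋆ₙₐ[𝕜] (K₂ →L[𝕜] K₂)) :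
    A →⋆ₙₐ[𝕜] (WithLp 2 (K₁ × K₂) →L[𝕜] WithLp 2 (K₁ × K₂)) where
  toFun a := (π₁ a).withLpProdMap (π₂ a)
  map_smul' c a := by simp only [map_smul]; rfl
  map_zero' := by simp only [map_zero]; rfl
  map_add' a b := by simp only [map_add]; rfl
  map_mul' a b := by simp only [map_mul]; rfl
  map_star' a := by simp only [map_star, star_eq_adjoint, adjoint_withLpProdMap]

@[simp]
theorem withLpProdMap_apply (π₁ : A →⋆ₙₐ[𝕜] (K₁ →L[𝕜] K₁)) (π₂ : A →⋆ₙₐ[𝕜] (K₂ →L[𝕜] K₂))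
    (a : A) : withLpProdMap π₁ π₂ a = (π₁ a).withLpProdMap (π₂ a) := rfl

end NonUnitalStarAlgHom

section Intertwiner

variable {K₁ K₂ : Type*} [NormedAddCommGroup K₁] [InnerProductSpace ℂ K₁] [CompleteSpace K₁]
  [NormedAddCommGroup K₂] [InnerProductSpace ℂ K₂] [CompleteSpace K₂]
  {S₁ : K₁ →L[ℂ] K₁} {S₂ : K₂ →L[ℂ] K₂} {W : K₂ →L[ℂ] K₁}

theorem commute_adjoint_comp_self_of_comp_eq (h : W ∘L S₂ = S₁ ∘L W)
    (h' : W ∘L adjoint S₂ = adjoint S₁ ∘L W) : Commute (adjoint W ∘L W) S₂ := by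
  have h'' : adjoint W ∘L S₁ = S₂ ∘L adjoint W := by
    simpa only [adjoint_comp, adjoint_adjoint] using (congrArg adjoint h').symm
  change (adjoint W ∘L W) ∘L S₂ = S₂ ∘L (adjoint W ∘L W)
  rw [comp_assoc, h, ← comp_assoc, h'', comp_assoc]

theorem adjoint_comp_comp_add_adjoint_comp_comp (h : W ∘L S₂ = S₁ ∘L W)
    (h' : W ∘L adjoint S₂ = adjoint S₁ ∘L W) {R : K₂ →L[ℂ] K₂} (hR : R.IsPositive)
    (hR_sq : R ∘L R = 1 - adjoint W ∘L W) :
    adjoint W ∘L S₁ ∘L W + adjoint R ∘L S₂ ∘L R = S₂ := by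
  have hWW := commute_adjoint_comp_self_of_comp_eq h h'
  have hR_comm : Commute R S₂ :=
    .of_mul_self_of_nonneg ((nonneg_iff_isPositive R).2 hR) <| by
      rw [mul_def, hR_sq]
      exact (Commute.one_left S₂).sub_left hWW
  have hRSR : adjoint R ∘L S₂ ∘L R = S₂ ∘L (1 - adjoint W ∘L W) := by
    rw [hR.isSelfAdjoint.adjoint_eq, ← hR_sq, ← comp_assoc,
      show R ∘L S₂ = S₂ ∘L R from hR_comm.eq, comp_assoc]
  rw [hRSR, ← h, ← comp_assoc, show (adjoint W ∘L W) ∘L S₂ = S₂ ∘L (adjoint W ∘L W) from hWW.eq,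
    comp_sub, one_def, comp_id, add_sub_cancel]

end Intertwiner

theorem stmt5 {A : Type*} [CStarAlgebra A]
    {H : Type*} [NormedAddCommGroup H] [InnerProductSpace ℂ H] [CompleteSpace H]
    {K₁ : Type*} [NormedAddCommGroup K₁] [InnerProductSpace ℂ K₁] [CompleteSpace K₁]
    {K₂ : Type*} [NormedAddCommGroup K₂] [InnerProductSpace ℂ K₂] [CompleteSpace K₂]
    (T₁ T₂ : A →ₗ[ℂ] (H →L[ℂ] H))
    (π₁ : A →⋆ₙₐ[ℂ] (K₁ →L[ℂ] K₁)) (V₁' : H →L[ℂ] K₁) (hV₁' : IsStinespring T₁ π₁ V₁')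
    (π₂ : A →⋆ₙₐ[ℂ] (K₂ →L[ℂ] K₂)) (V₂' : H →L[ℂ] K₂) (hV₂' : IsStinespring T₂ π₂ V₂')
    (W : K₂ →L[ℂ] K₁)
    (hWπ : ∀ a : A, W.comp (π₂ a) = (π₁ a).comp W)
    -- `R` is the positive square root of `1 - W⋆W`
    (R : K₂ →L[ℂ] K₂) (hRpos : R.IsPositive)
    (hRsq : R.comp R = 1 - (adjoint W).comp W) :
    ∃ (π : A →⋆ₙₐ[ℂ] (WithLp 2 (K₁ × K₂) →L[ℂ] WithLp 2 (K₁ × K₂)))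
      (V₁ V₂ : H →L[ℂ] WithLp 2 (K₁ × K₂)),
      -- `π = π₁ ⊕ π₂` acts diagonally
      (∀ (a : A) (x : WithLp 2 (K₁ × K₂)),
        π a x = (WithLp.equiv 2 (K₁ × K₂)).symm
          (π₁ a ((WithLp.equiv 2 (K₁ × K₂)) x).1, π₂ a ((WithLp.equiv 2 (K₁ × K₂)) x).2)) ∧
      -- `V₁ ψ = (V̂₁ ψ, 0)`
      (∀ ψ : H, V₁ ψ = (WithLp.equiv 2 (K₁ × K₂)).symm (V₁' ψ, 0)) ∧
      -- `V₂ ψ = (W V̂₂ ψ, √(1 - W⋆W) V̂₂ ψ)`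
      (∀ ψ : H, V₂ ψ = (WithLp.equiv 2 (K₁ × K₂)).symm (W (V₂' ψ), R (V₂' ψ))) ∧
      IsStinespring T₁ π V₁ ∧ IsStinespring T₂ π V₂ ∧
      (adjoint V₁).comp V₂ = (adjoint V₁').comp (W.comp V₂') := by
  refine ⟨.withLpProdMap π₁ π₂, V₁'.withLpProd 0, (W ∘L V₂').withLpProd (R ∘L V₂'),
    fun _ _ => rfl, fun _ => rfl, fun _ => rfl, fun a => ?_, fun a => ?_, ?_⟩
  · rw [hV₁' a, NonUnitalStarAlgHom.withLpProdMap_apply, withLpProdMap_comp_withLpProd,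
      adjoint_withLpProd_comp_withLpProd]
    simp
  · have hWπ_star : W ∘L adjoint (π₂ a) = adjoint (π₁ a) ∘L W := by
      simpa only [map_star, star_eq_adjoint] using hWπ (star a)
    rw [hV₂' a, NonUnitalStarAlgHom.withLpProdMap_apply, withLpProdMap_comp_withLpProd,
      adjoint_withLpProd_comp_withLpProd]
    conv_lhs => rw [← adjoint_comp_comp_add_adjoint_comp_comp (hWπ a) hWπ_star hRpos hRsq]
    simp only [adjoint_comp, comp_assoc, comp_add, add_comp]
  · rw [adjoint_withLpProd_comp_withLpProd]
    simp
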